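/- arXiv:1904.13388 — 3 statements merged into one kernel-verified Lean document; each statement's English description precedes it below -/
import Mathlib

section
/- Let Q be a latin quandle and a ∈ Q. Then Q is principal if and only if Dis(Q) is equal, as a set, to {L_b ∘ L_a⁻¹ : b ∈ Q}. -/
universe u v

/-- A quandle structure on a type `Q`: each left multiplication `L a : b ↦ op a b`
is a bijection (with inverse `invOp a`), the operation is left self-distributive,
and every element is idempotent. -/
structure QuandleStr (Q : Type u) where
  op : Q → Q → Q
  invOp : Q → Q → Q
  inv_op : ∀ a b, invOp a (op a b) = b
  op_inv : ∀ a b, op a (invOp a b) = b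
  self_distrib : ∀ a b c, op a (op b c) = op (op a b) (op a c)
  op_self : ∀ a, op a a = a

namespace QuandleStr

variable {Q : Type u} (S : QuandleStr Q)

/-- Left multiplication as a permutation of `Q`. -/
def L (a : Q) : Equiv.Perm Q where
  toFun := S.op a
  invFun := S.invOp a
  left_inv := S.inv_op a
  right_inv := S.op_inv a

/-- The left multiplication group `LMlt(Q)`. -/
def LMlt : Subgroup (Equiv.Perm Q) := Subgroup.closure (Set.range S.L)

/-- The displacement group `Dis(Q)`, generated by `L a * (L b)⁻¹`. -/
def Dis : Subgroup (Equiv.Perm Q) :=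
  Subgroup.closure { g : Equiv.Perm Q | ∃ a b : Q, g = S.L a * (S.L b)⁻¹ }

/-- `Q` is connected if `Dis(Q)` acts transitively. -/
def IsConnected : Prop := ∀ a b : Q, ∃ g ∈ S.Dis, g a = b

/-- `Q` is semiregular if the stabilizer in `Dis(Q)` of every point is trivial. -/
def IsSemiregular : Prop := ∀ g ∈ S.Dis, ∀ x : Q, g x = x → g = 1

/-- `Q` is faithful if `a ↦ L a` is injective. -/
def IsFaithful : Prop := ∀ a b : Q, (∀ c : Q, S.op a c = S.op b c) → a = b

/-- `Q` is latin if every right multiplication is bijective. -/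
def IsLatin : Prop := ∀ a : Q, Function.Bijective (fun b => S.op b a)

/-- `Q` is a crossed set if `a*b = b` implies `b*a = a`. -/
def IsCrossedSet : Prop := ∀ a b : Q, S.op a b = b → S.op b a = a

/-- A subquandle: a nonempty subset closed under the operation and left division. -/
def IsSubquandle (A : Set Q) : Prop :=
  A.Nonempty ∧ (∀ a ∈ A, ∀ b ∈ A, S.op a b ∈ A) ∧ (∀ a ∈ A, ∀ b ∈ A, S.invOp a b ∈ A)

/-- The automorphism group of the quandle, as a subgroup of `Equiv.Perm Q`. -/
def autGroup : Subgroup (Equiv.Perm Q) where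
  carrier := { h : Equiv.Perm Q | ∀ a b : Q, h (S.op a b) = S.op (h a) (h b) }
  one_mem' := by intro a b; rfl
  mul_mem' := by
    intro g h hg hh a b
    show g (h (S.op a b)) = S.op (g (h a)) (g (h b))
    rw [hh, hg]
  inv_mem' := by
    intro g hg a b
    apply g.injective
    rw [hg]
    simp

/-- `Q` is doubly homogeneous if `Aut(Q)` acts 2-transitively. -/
def IsDoublyHomogeneous : Prop :=
  ∀ a b c d : Q, a ≠ b → c ≠ d → ∃ h ∈ S.autGroup, h a = c ∧ h b = d

/-- The restriction of the quandle structure to a subset closed under both operations. -/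
def restrict (A : Set Q) (h1 : ∀ a ∈ A, ∀ b ∈ A, S.op a b ∈ A)
    (h2 : ∀ a ∈ A, ∀ b ∈ A, S.invOp a b ∈ A) : QuandleStr A where
  op a b := ⟨S.op a b, h1 a a.2 b b.2⟩
  invOp a b := ⟨S.invOp a b, h2 a a.2 b b.2⟩
  inv_op a b := Subtype.ext (S.inv_op a b)
  op_inv a b := Subtype.ext (S.op_inv a b)
  self_distrib a b c := Subtype.ext (S.self_distrib a b c)
  op_self a := Subtype.ext (S.op_self a)

/-- The stabilizer of a point in the displacement group, as a set of permutations. -/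
def disStab (x : Q) : Set (Equiv.Perm Q) := { g : Equiv.Perm Q | g ∈ S.Dis ∧ g x = x }

/-- The class of `a` under the relation `σ_Q`: elements with the same stabilizer in `Dis(Q)`. -/
def sigmaClass (a : Q) : Set Q := { b : Q | S.disStab b = S.disStab a }

/-- A quandle is strictly simple if it has at least two elements and no proper subquandle. -/
def IsStrictlySimple : Prop :=
  (∃ a b : Q, a ≠ b) ∧
    ∀ A : Set Q, S.IsSubquandle A → (∀ a ∈ A, ∀ b ∈ A, a = b) ∨ A = Set.univ

/-- A subset which is a strictly simple subquandle (with the restricted operation). -/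
def IsStrictlySimpleSub (A : Set Q) : Prop :=
  S.IsSubquandle A ∧ (∃ a ∈ A, ∃ b ∈ A, a ≠ b) ∧
    ∀ B : Set Q, B ⊆ A → S.IsSubquandle B → (∀ x ∈ B, ∀ y ∈ B, x = y) ∨ B = A

/-- A congruence of a quandle. -/
structure IsCongruence (r : Q → Q → Prop) : Prop where
  refl : ∀ a, r a a
  symm : ∀ {a b}, r a b → r b a
  trans : ∀ {a b c}, r a b → r b c → r a c
  op_compat : ∀ {a b c d}, r a b → r c d → r (S.op a c) (S.op b d)
  invOp_compat : ∀ {a b c d}, r a b → r c d → r (S.invOp a c) (S.invOp b d)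

/-- A quandle is simple if it has at least two elements and its only congruences are
the equality relation and the all relation. -/
def IsSimple : Prop :=
  (∃ a b : Q, a ≠ b) ∧
    ∀ r : Q → Q → Prop, S.IsCongruence r → (∀ a b, r a b ↔ a = b) ∨ (∀ a b, r a b)

end QuandleStr

/-- The product of a family of quandles, with componentwise operation. -/
def piQuandle {I : Type u} {Q : I → Type v} (S : ∀ i, QuandleStr (Q i)) :
    QuandleStr (∀ i, Q i) where
  op a b := fun i => (S i).op (a i) (b i)
  invOp a b := fun i => (S i).invOp (a i) (b i)
  inv_op a b := funext fun i => (S i).inv_op (a i) (b i)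
  op_inv a b := funext fun i => (S i).op_inv (a i) (b i)
  self_distrib a b c := funext fun i => (S i).self_distrib (a i) (b i) (c i)
  op_self a := funext fun i => (S i).op_self (a i)

/-- The principal quandle `Q_Hom(G, f)` over a group `G` with automorphism `f`:
the underlying set is `G` with `a * b = a · f(a⁻¹ b)`. -/
def principalQuandle {G : Type u} [Group G] (f : G ≃* G) : QuandleStr G where
  op a b := a * f (a⁻¹ * b)
  invOp a b := a * f.symm (a⁻¹ * b)
  inv_op a b := by simp
  op_inv a b := by simp
  self_distrib a b c := by
    simp only [map_mul, map_inv, mul_inv_rev, mul_assoc, inv_mul_cancel_left,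
      mul_inv_cancel_left, inv_inv]
  op_self a := by simp

/-- The affine quandle `Aff(A, f)` over an abelian group `A` with automorphism `f`:
the underlying set is `A` with `a * b = a - f a + f b`. -/
def affineQuandle {A : Type u} [AddCommGroup A] (f : A ≃+ A) : QuandleStr A where
  op a b := a - f a + f b
  invOp a b := f.symm (b - a + f a)
  inv_op a b := by
    have h : (a - f a + f b) - a + f a = f b := by abel
    rw [h, f.symm_apply_apply]
  op_inv a b := by
    rw [f.apply_symm_apply]
    abel
  self_distrib a b c := by
    simp only [map_add, map_sub]
    abel
  op_self a := by
    rw [sub_add_cancel]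

/-- A witness that a quandle is principal: a group `G`, an automorphism `f`, and a
quandle isomorphism with `Q_Hom(G, f)`. -/
structure PrincipalWitness {Q : Type u} (S : QuandleStr Q) : Type (u + 1) where
  G : Type u
  [grp : Group G]
  f : G ≃* G
  e : Q ≃ G
  hop : ∀ a b : Q, e (S.op a b) = (principalQuandle f).op (e a) (e b)

/-- A quandle is principal if it is isomorphic to some `Q_Hom(G, f)`. -/
def IsPrincipal {Q : Type u} (S : QuandleStr Q) : Prop := Nonempty (PrincipalWitness S)

/-! For a latin quandle `L_b L_a⁻¹ a = b * a` takes every value, so `Dis(Q)` acts transitively,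
and `Dis(Q) = {L_b L_a⁻¹}` says exactly that `g ↦ g a` is injective on `Dis(Q)`.
If `g ↦ g a` is a bijection `Dis(Q) ≃ Q`, transporting the group structure of `Dis(Q)`, with the
automorphism `g ↦ L_a g L_a⁻¹`, makes `Q` principal: elements of `Dis(Q)` are quandle
automorphisms, so `g L_a g⁻¹ = L_{g a}`, which is the principal operation.
Conversely, in `Q_Hom(G, f)` every `L_x L_y⁻¹` is a left translation of `G`, so `Dis(Q)` acts
semiregularly. -/

namespace QuandleStr

variable {Q : Type u} (S : QuandleStr Q)

@[simp] lemma L_apply (b c : Q) : S.L b c = S.op b c := rfl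

@[simp] lemma L_symm_apply (b c : Q) : (S.L b).symm c = S.invOp b c := rfl

lemma invOp_self (a : Q) : S.invOp a a = a := by
  simpa only [S.op_self] using S.inv_op a a

@[simp] lemma Dis_smul_def (g : S.Dis) (x : Q) : g • x = (g : Equiv.Perm Q) x := rfl

lemma L_mul_L_inv_mem_Dis (b c : Q) : S.L b * (S.L c)⁻¹ ∈ S.Dis :=
  Subgroup.subset_closure ⟨b, c, rfl⟩

lemma L_mul_L_inv_apply_self (b a : Q) : (S.L b * (S.L a)⁻¹) a = S.op b a := by
  simp [S.invOp_self]

lemma mem_autGroup {h : Equiv.Perm Q} :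
    h ∈ S.autGroup ↔ ∀ a b : Q, h (S.op a b) = S.op (h a) (h b) :=
  Iff.rfl

lemma L_mem_autGroup (a : Q) : S.L a ∈ S.autGroup :=
  S.self_distrib a

lemma Dis_le_autGroup : S.Dis ≤ S.autGroup := by
  refine (Subgroup.closure_le _).2 ?_
  rintro _ ⟨x, y, rfl⟩
  exact mul_mem (S.L_mem_autGroup x) (inv_mem (S.L_mem_autGroup y))

lemma mul_L_mul_inv_of_mem_autGroup {h : Equiv.Perm Q} (hh : h ∈ S.autGroup) (c : Q) :
    h * S.L c * h⁻¹ = S.L (h c) := by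
  ext z
  simp [S.mem_autGroup.1 hh]

lemma map_conj_Dis {h : Equiv.Perm Q} (hh : h ∈ S.autGroup) :
    S.Dis.map (MulAut.conj h : Equiv.Perm Q →* Equiv.Perm Q) = S.Dis := by
  have conj_gen : ∀ x y : Q,
      MulAut.conj h (S.L x * (S.L y)⁻¹) = S.L (h x) * (S.L (h y))⁻¹ := fun x y => by
    rw [map_mul, map_inv, MulAut.conj_apply, MulAut.conj_apply,
      S.mul_L_mul_inv_of_mem_autGroup hh, S.mul_L_mul_inv_of_mem_autGroup hh]
  rw [Dis, MonoidHom.map_closure]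
  congr 1
  ext g
  constructor
  · rintro ⟨_, ⟨x, y, rfl⟩, rfl⟩
    exact ⟨h x, h y, conj_gen x y⟩
  · rintro ⟨x, y, rfl⟩
    refine ⟨_, ⟨h⁻¹ x, h⁻¹ y, rfl⟩, (conj_gen _ _).trans ?_⟩
    simp

def conjDis {h : Equiv.Perm Q} (hh : h ∈ S.autGroup) : S.Dis ≃* S.Dis :=
  ((MulAut.conj h).subgroupMap S.Dis).trans (MulEquiv.subgroupCongr (S.map_conj_Dis hh))

lemma coe_conjDis_apply {h : Equiv.Perm Q} (hh : h ∈ S.autGroup) (g : S.Dis) :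
    (S.conjDis hh g : Equiv.Perm Q) = h * g * h⁻¹ :=
  rfl

theorem isPrincipal_of_bijective_smul (a : Q)
    (hbij : Function.Bijective fun g : S.Dis => g • a) : IsPrincipal S := by
  let ev : S.Dis ≃ Q := Equiv.ofBijective _ hbij
  refine ⟨⟨S.Dis, S.conjDis (S.L_mem_autGroup a), ev.symm, fun x y => ev.injective ?_⟩⟩
  obtain ⟨gx, rfl⟩ := ev.surjective x
  obtain ⟨gy, rfl⟩ := ev.surjective y
  have hconj : (gx : Equiv.Perm Q) * S.L a * (gx : Equiv.Perm Q)⁻¹ = S.L ((gx : Equiv.Perm Q) a) :=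
    S.mul_L_mul_inv_of_mem_autGroup (S.Dis_le_autGroup gx.2) a
  rw [Equiv.apply_symm_apply, Equiv.symm_apply_apply, Equiv.symm_apply_apply]
  change S.L ((gx : Equiv.Perm Q) a) ((gy : Equiv.Perm Q) a) =
    ((gx : Equiv.Perm Q) * (S.L a * ((gx : Equiv.Perm Q)⁻¹ * gy) * (S.L a)⁻¹)) a
  rw [← hconj]
  simp [S.invOp_self]

theorem isSemiregular_of_isPrincipal (hP : IsPrincipal S) : S.IsSemiregular := by
  obtain ⟨⟨G, f, e, hop⟩⟩ := hP
  let τ : G →* Equiv.Perm Q :=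
    (e.symm.permCongrHom : Equiv.Perm G →* Equiv.Perm Q).comp (MulAction.toPermHom G G)
  have hτ : ∀ c x, τ c x = e.symm (c * e x) := fun _ _ => rfl
  -- in `Q_Hom(G, f)`, `x * z = x f(x)⁻¹ f(z)`, so `L_x L_y⁻¹` translates by `(x * y) y⁻¹`
  have hDis : S.Dis ≤ τ.range := by
    refine (Subgroup.closure_le _).2 ?_
    rintro _ ⟨x, y, rfl⟩
    refine ⟨e (S.op x y) * (e y)⁻¹, ?_⟩
    rw [eq_mul_inv_iff_mul_eq]
    ext z
    rw [Equiv.Perm.mul_apply, hτ, Equiv.symm_apply_eq]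
    simp only [L_apply, hop, principalQuandle, map_mul, map_inv]
    group
  intro g hg x hx
  obtain ⟨c, rfl⟩ := hDis hg
  rw [hτ, Equiv.symm_apply_eq, mul_eq_right] at hx
  rw [hx, map_one]

lemma injective_smul_of_isSemiregular (hS : S.IsSemiregular) (a : Q) :
    Function.Injective fun g : S.Dis => g • a := by
  intro g₁ g₂ h
  have hfix : ((g₂⁻¹ * g₁ : S.Dis) : Equiv.Perm Q) a = a := by
    rw [Subgroup.coe_mul, Subgroup.coe_inv, Equiv.Perm.mul_apply, Equiv.Perm.inv_eq_iff_eq]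
    exact h
  have hone : g₂⁻¹ * g₁ = 1 := Subtype.ext (hS _ (g₂⁻¹ * g₁).2 a hfix)
  exact (inv_mul_eq_one.1 hone).symm

lemma isConnected_of_isLatin (hl : S.IsLatin) : S.IsConnected := fun a c => by
  obtain ⟨b, hb⟩ := (hl a).2 c
  exact ⟨_, S.L_mul_L_inv_mem_Dis b a, (S.L_mul_L_inv_apply_self b a).trans hb⟩

lemma surjective_smul_of_isConnected (hC : S.IsConnected) (a : Q) :
    Function.Surjective fun g : S.Dis => g • a := fun c => by
  obtain ⟨g, hg, rfl⟩ := hC a c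
  exact ⟨⟨g, hg⟩, rfl⟩

lemma coe_Dis_eq_iff_injective_smul (hl : S.IsLatin) (a : Q) :
    (S.Dis : Set (Equiv.Perm Q)) = { g : Equiv.Perm Q | ∃ b : Q, g = S.L b * (S.L a)⁻¹ } ↔
      Function.Injective fun g : S.Dis => g • a := by
  constructor
  · intro hD g₁ g₂ h
    have hg₁ : (g₁ : Equiv.Perm Q) ∈ (S.Dis : Set (Equiv.Perm Q)) := g₁.2
    have hg₂ : (g₂ : Equiv.Perm Q) ∈ (S.Dis : Set (Equiv.Perm Q)) := g₂.2
    rw [hD] at hg₁ hg₂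
    obtain ⟨b₁, hb₁⟩ := hg₁
    obtain ⟨b₂, hb₂⟩ := hg₂
    have hb : b₁ = b₂ := (hl a).1 <| by
      simpa [hb₁, hb₂, S.L_mul_L_inv_apply_self] using h
    exact Subtype.ext (by rw [hb₁, hb₂, hb])
  · intro hinj
    refine Set.Subset.antisymm (fun g hg => ?_) ?_
    · obtain ⟨b, hb⟩ := (hl a).2 (g a)
      refine ⟨b, congrArg Subtype.val (@hinj ⟨g, hg⟩ ⟨_, S.L_mul_L_inv_mem_Dis b a⟩ ?_)⟩
      simp [S.L_mul_L_inv_apply_self, hb]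
    · rintro _ ⟨b, rfl⟩
      exact S.L_mul_L_inv_mem_Dis b a

end QuandleStr

/-- A latin quandle `Q` is principal if and only if
`Dis(Q) = {L b ∘ (L a)⁻¹ : b ∈ Q}` as a set, for the given `a ∈ Q`. -/
theorem statement4 {Q : Type u} (S : QuandleStr Q) (hl : S.IsLatin) (a : Q) :
    IsPrincipal S ↔
      (S.Dis : Set (Equiv.Perm Q)) = { g : Equiv.Perm Q | ∃ b : Q, g = S.L b * (S.L a)⁻¹ } := by
  rw [S.coe_Dis_eq_iff_injective_smul hl a]
  refine ⟨fun hP => S.injective_smul_of_isSemiregular (S.isSemiregular_of_isPrincipal hP) a,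
    fun hinj => S.isPrincipal_of_bijective_smul a ⟨hinj, ?_⟩⟩
  exact S.surjective_smul_of_isConnected (S.isConnected_of_isLatin hl) a
end

section
/- Let Q be a finite doubly homogeneous quandle. Then either a*b = b for all a,b ∈ Q (Q is a projection quandle), or Q is latin. -/
universe u v

/-!
Double homogeneity makes the property "`a * b = b`" of a pair of distinct elements
all-or-nothing. If it fails for every such pair, then for `d ≠ c` an automorphism fixing `c`
and sending `d * c` to `d` shows that `d` lies in the image of right multiplication by `c`;
on a finite set a surjective map is bijective.
-/

namespace QuandleStr

variable {Q : Type u} {S : QuandleStr Q}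

theorem IsDoublyHomogeneous.op_ne_of_ne (hdh : S.IsDoublyHomogeneous) {a b : Q}
    (hab : S.op a b ≠ b) {x y : Q} (hxy : x ≠ y) : S.op x y ≠ y := by
  have hane : a ≠ b := by
    rintro rfl
    exact hab (S.op_self a)
  obtain ⟨h, hh, rfl, rfl⟩ := hdh a b x y hane hxy
  intro hxy'
  exact hab (h.injective (by rw [hh, hxy']))

theorem IsDoublyHomogeneous.surjective_op_right (hdh : S.IsDoublyHomogeneous)
    (hne : ∀ x y : Q, x ≠ y → S.op x y ≠ y) (c : Q) :
    Function.Surjective fun b => S.op b c := by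
  intro d
  by_cases hdc : d = c
  · exact ⟨c, by simp only [S.op_self, hdc]⟩
  obtain ⟨h, hh, hdcd, hcc⟩ := hdh (S.op d c) c d c (hne d c hdc) hdc
  refine ⟨h d, ?_⟩
  change S.op (h d) c = d
  rw [← hcc, ← hh, hdcd]

end QuandleStr

/-- A finite doubly homogeneous quandle is either a projection quandle
or latin. -/
theorem statement14 {Q : Type u} [Finite Q] (S : QuandleStr Q)
    (hdh : S.IsDoublyHomogeneous) :
    (∀ a b : Q, S.op a b = b) ∨ S.IsLatin := by
  by_cases hproj : ∀ a b : Q, S.op a b = b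
  · exact Or.inl hproj
  push Not at hproj
  obtain ⟨a, b, hab⟩ := hproj
  have hne : ∀ x y : Q, x ≠ y → S.op x y ≠ y := fun _ _ => hdh.op_ne_of_ne hab
  exact Or.inr fun c => Finite.surjective_iff_bijective.mp (hdh.surjective_op_right hne c)
end

section
/- Let Q be a finite latin principal quandle and let p be a prime dividing |Q|. Then Q has a strictly simple subquandle whose cardinality is a power of p. -/
universe u v

/-!
Write `Q = Q_Hom(G, f)`. Latinity forces `f` to be fixed-point-free, so for finite `G` the map
`g ↦ g / f g` is a bijection. This makes `f` stabilise some Sylow `p`-subgroup, hence some minimal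
nontrivial `f`-invariant subgroup `H`, a `p`-group. Every subgroup stable under `f` is a
subquandle, and conversely a subquandle through `1` is closed under `f`, under `x ↦ x / f x` and
under `(x, y) ↦ x f(x⁻¹ y)`; by finiteness the first two maps are onto it, so it is closed under
products and is an `f`-invariant subgroup. Translating a subquandle of `H` with two points to pass
through `1` therefore yields a nontrivial invariant subgroup of `H`, which is `H` by minimality.
-/

namespace QuandleStr

variable {Q Q' : Type*} {S : QuandleStr Q} {S' : QuandleStr Q'} {e : Q ≃ Q'}

theorem map_invOp_of_map_op (he : ∀ a b, e (S.op a b) = S'.op (e a) (e b)) (a b : Q) :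
    e (S.invOp a b) = S'.invOp (e a) (e b) := by
  rw [← S'.inv_op (e a) (e (S.invOp a b)), ← he, S.op_inv]

theorem symm_map_op_of_map_op (he : ∀ a b, e (S.op a b) = S'.op (e a) (e b)) (a b : Q') :
    e.symm (S'.op a b) = S.op (e.symm a) (e.symm b) := by
  rw [e.symm_apply_eq, he, e.apply_symm_apply, e.apply_symm_apply]

theorem IsLatin.of_map_op (he : ∀ a b, e (S.op a b) = S'.op (e a) (e b)) (hl : S.IsLatin) :
    S'.IsLatin := by
  intro a
  have hconj : (fun b => S'.op b a) = e ∘ (fun x => S.op x (e.symm a)) ∘ e.symm := by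
    funext b
    simp only [Function.comp_apply, he, e.apply_symm_apply]
  rw [hconj]
  exact e.bijective.comp ((hl _).comp e.symm.bijective)

theorem IsSubquandle.image_of_map_op (he : ∀ a b, e (S.op a b) = S'.op (e a) (e b))
    {B : Set Q} (hB : S.IsSubquandle B) : S'.IsSubquandle (e '' B) := by
  obtain ⟨hne, hop, hinv⟩ := hB
  refine ⟨hne.image e, ?_, ?_⟩
  · rintro _ ⟨a, ha, rfl⟩ _ ⟨b, hb, rfl⟩
    exact ⟨_, hop a ha b hb, he a b⟩
  · rintro _ ⟨a, ha, rfl⟩ _ ⟨b, hb, rfl⟩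
    exact ⟨_, hinv a ha b hb, map_invOp_of_map_op he a b⟩

theorem IsStrictlySimpleSub.image_of_map_op (he : ∀ a b, e (S.op a b) = S'.op (e a) (e b))
    {A : Set Q} (hA : S.IsStrictlySimpleSub A) : S'.IsStrictlySimpleSub (e '' A) := by
  obtain ⟨hsub, ⟨a, ha, b, hb, hab⟩, hmin⟩ := hA
  refine ⟨hsub.image_of_map_op he, ⟨e a, ⟨a, ha, rfl⟩, e b, ⟨b, hb, rfl⟩, e.injective.ne hab⟩, ?_⟩
  intro B hBA hB
  have hBA' : e.symm '' B ⊆ A := by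
    rw [e.symm_image_subset]
    exact hBA
  rcases hmin _ hBA' (hB.image_of_map_op (symm_map_op_of_map_op he)) with h | h
  · left
    intro x hx y hy
    exact e.symm.injective (h _ ⟨x, hx, rfl⟩ _ ⟨y, hy, rfl⟩)
  · right
    rw [← h, e.image_symm_image]

end QuandleStr

section Principal

open MonoidHom

variable {G : Type*} [Group G] {f : G ≃* G}

theorem principalQuandle_op (a b : G) : (principalQuandle f).op a b = a * f (a⁻¹ * b) := rfl

theorem principalQuandle_invOp (a b : G) :
    (principalQuandle f).invOp a b = a * f.symm (a⁻¹ * b) := rfl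

theorem principalQuandle_op_mul_left (c a b : G) :
    (principalQuandle f).op (c * a) (c * b) = c * (principalQuandle f).op a b := by
  simp only [principalQuandle_op, mul_inv_rev, mul_assoc, inv_mul_cancel_left]

theorem fixedPointFree_of_isLatin (hl : (principalQuandle f).IsLatin) : FixedPointFree f := by
  intro g hg
  refine (hl 1).1 ?_
  simp [principalQuandle_op, hg]

theorem isSubquandle_principalQuandle_coe (H : Subgroup G) (hH : ∀ x, f x ∈ H ↔ x ∈ H) :
    (principalQuandle f).IsSubquandle (H : Set G) := by
  refine ⟨⟨1, H.one_mem⟩, fun a ha b hb => ?_, fun a ha b hb => ?_⟩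
  · exact mul_mem ha ((hH _).2 (mul_mem (inv_mem ha) hb))
  · refine mul_mem ha ((hH _).1 ?_)
    rw [MulEquiv.apply_symm_apply]
    exact mul_mem (inv_mem ha) hb

theorem exists_subgroup_of_isSubquandle [Finite G] (hf : FixedPointFree f) {B : Set G}
    (hB : (principalQuandle f).IsSubquandle B) (h1 : (1 : G) ∈ B) :
    ∃ K : Subgroup G, (K : Set G) = B ∧ ∀ x, f x ∈ K ↔ x ∈ K := by
  obtain ⟨-, hop, hinvOp⟩ := hB
  have hf_mem : ∀ x ∈ B, f x ∈ B := fun x hx => by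
    simpa [principalQuandle_op] using hop 1 h1 x hx
  have hf_symm_mem : ∀ x ∈ B, f.symm x ∈ B := fun x hx => by
    simpa [principalQuandle_invOp] using hinvOp 1 h1 x hx
  have hcomm_mem : ∀ x ∈ B, commutatorMap f x ∈ B := fun x hx => by
    simpa [principalQuandle_op, div_eq_mul_inv] using hop x hx 1 h1
  -- every product in `B` is `(a / f a) * f d = a * f (a⁻¹ * d)` with `a, d ∈ B`
  have hmul : ∀ x ∈ B, ∀ y ∈ B, x * y ∈ B := by
    intro x hx y hy
    obtain ⟨a, ha, rfl⟩ := ((B.toFinite.injOn_iff_bijOn_of_mapsTo hcomm_mem).1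
      hf.commutatorMap_injective.injOn).surjOn hx
    obtain ⟨d, hd, rfl⟩ := ((B.toFinite.injOn_iff_bijOn_of_mapsTo hf_mem).1
      f.injective.injOn).surjOn hy
    simpa [principalQuandle_op, div_eq_mul_inv, mul_assoc] using hop a ha d hd
  let M : Submonoid G := { carrier := B, mul_mem' := fun ha hb => hmul _ ha _ hb, one_mem' := h1 }
  have hinv : ∀ x ∈ B, x⁻¹ ∈ B := fun x hx =>
    Submonoid.powers_le.2 (show x ∈ M from hx)
      (mem_powers_iff_mem_zpowers.2 (inv_mem (Subgroup.mem_zpowers x)))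
  refine ⟨{ M with inv_mem' := hinv _ }, rfl, fun x => ⟨fun hx => ?_, hf_mem x⟩⟩
  show x ∈ B
  simpa using hf_symm_mem _ hx

theorem exists_sylow_apply_mem_iff [Finite G] (hf : FixedPointFree f) (p : ℕ) [Fact p.Prime] :
    ∃ P : Sylow p G, ∀ x, f x ∈ P ↔ x ∈ P := by
  obtain ⟨P⟩ : Nonempty (Sylow p G) := inferInstance
  obtain ⟨g, hg⟩ := MulAction.exists_smul_eq G ((f : MulAut G) • P) P
  obtain ⟨k, rfl⟩ := hf.commutatorMap_surjective g
  have hfP : (f : MulAut G) • P = (commutatorMap f k)⁻¹ • P := eq_inv_smul_iff.2 hg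
  have hf_smul (y : G) (R : Sylow p G) : (f : MulAut G) • (y • R) = f y • (f : MulAut G) • R := by
    rw [Sylow.smul_def, Sylow.smul_def, smul_smul, smul_smul]
    congr 1
    ext
    simp [MulAut.conj_apply]
  have hQ : (f : MulAut G) • (k⁻¹ • P) = k⁻¹ • P := by
    rw [hf_smul, hfP, smul_smul]
    congr 1
    simp [commutatorMap_apply, div_eq_mul_inv]
  refine ⟨k⁻¹ • P, fun x => ?_⟩
  have h := Subgroup.smul_mem_pointwise_smul_iff (a := (f : MulAut G)) (x := x)
    (S := ((k⁻¹ • P : Sylow p G) : Subgroup G))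
  rwa [← Sylow.pointwise_smul_def, hQ] at h

theorem isStrictlySimpleSub_of_minimal [Finite G] (hf : FixedPointFree f) {H : Subgroup G}
    (hH : Minimal (fun K : Subgroup G => K ≠ ⊥ ∧ ∀ x, f x ∈ K ↔ x ∈ K) H) :
    (principalQuandle f).IsStrictlySimpleSub (H : Set G) := by
  obtain ⟨⟨hbot, hinv⟩, hmin⟩ := hH
  refine ⟨isSubquandle_principalQuandle_coe H hinv, ?_, fun B hBH hB => ?_⟩
  · obtain ⟨a, ha, ha1⟩ := H.bot_or_exists_ne_one.resolve_left hbot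
    exact ⟨a, ha, 1, H.one_mem, ha1⟩
  refine or_iff_not_imp_left.2 fun hnontriv => ?_
  push Not at hnontriv
  obtain ⟨c, hc, b, hb, hcb⟩ := hnontriv
  obtain ⟨K, hKB, hKinv⟩ := exists_subgroup_of_isSubquandle hf
    (hB.image_of_map_op (e := Equiv.mulLeft c⁻¹)
      fun x y => (principalQuandle_op_mul_left c⁻¹ x y).symm)
    ⟨c, hc, inv_mul_cancel c⟩
  have hmemK : ∀ x, x ∈ K ↔ c * x ∈ B := fun x => by
    rw [← SetLike.mem_coe, hKB, Equiv.image_eq_preimage_symm]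
    simp
  have hcH : c ∈ H := hBH hc
  have hKH : K ≤ H := fun x hx => by
    simpa using mul_mem (inv_mem hcH) (hBH ((hmemK x).1 hx))
  have hKbot : K ≠ ⊥ := fun hK =>
    hcb (inv_mul_eq_one.1 (K.eq_bot_iff_forall.1 hK _ ((hmemK _).2 (by simpa using hb))))
  have hHK : H ≤ K := hmin ⟨hKbot, hKinv⟩ hKH
  ext x
  refine ⟨fun hx => hBH hx, fun hx => ?_⟩
  simpa using (hmemK _).1 (hHK (mul_mem (inv_mem hcH) hx))

theorem exists_isStrictlySimpleSub_principalQuandle [Finite G] (hf : FixedPointFree f) {p : ℕ}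
    (hp : p.Prime) (hdvd : p ∣ Nat.card G) :
    ∃ A : Set G, (principalQuandle f).IsStrictlySimpleSub A ∧ ∃ k : ℕ, Nat.card A = p ^ k := by
  have := Fact.mk hp
  obtain ⟨P, hP⟩ := exists_sylow_apply_mem_iff hf p
  obtain ⟨H, hHP, hH⟩ := exists_minimal_le_of_wellFoundedLT
    (fun K : Subgroup G => K ≠ ⊥ ∧ ∀ x, f x ∈ K ↔ x ∈ K) P ⟨P.ne_bot_of_dvd_card hdvd, hP⟩
  exact ⟨H, isStrictlySimpleSub_of_minimal hf hH, (P.2.to_le hHP).exists_card_eq⟩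

end Principal

/-- A finite latin principal quandle has, for every prime `p` dividing
its cardinality, a strictly simple subquandle of cardinality a power of `p`. -/
theorem statement17 {Q : Type u} [Finite Q] (S : QuandleStr Q) (hl : S.IsLatin)
    (hpr : IsPrincipal S) (p : ℕ) (hp : p.Prime) (hdvd : p ∣ Nat.card Q) :
    ∃ A : Set Q, S.IsStrictlySimpleSub A ∧ ∃ k : ℕ, Nat.card A = p ^ k := by
  obtain ⟨⟨G, f, e, he⟩⟩ := hpr
  have : Finite G := Finite.of_equiv Q e
  obtain ⟨A, hA, k, hk⟩ := exists_isStrictlySimpleSub_principalQuandle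
    (fixedPointFree_of_isLatin (hl.of_map_op he)) hp (Nat.card_congr e ▸ hdvd)
  refine ⟨e.symm '' A, hA.image_of_map_op (QuandleStr.symm_map_op_of_map_op he), k, ?_⟩
  rw [Nat.card_image_of_injective e.symm.injective, hk]
end
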